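/- arXiv:hep-th/0603138 — 2 statements merged into one kernel-verified Lean document; each statement's English description precedes it below -/
import Mathlib

section
/- Let A be a unital *-algebra over ℝ, q a nonzero real number, and x a 2×2 matrix with entries in A satisfying the M_q(2) relations and the reality condition x† = x̄. Suppose r ∈ A is self-adjoint (r* = r), invertible with inverse r⁻¹, commutes with the four entries of x, and satisfies r² = det_q(x). Then T := x·r⁻¹ satisfies: T·T̄ = T̄·T = I₂, T† = T̄ (so T† = T⁻¹, i.e. T is unitary), and det_q(T) = 1 (the matrix elements of T = x/|x| generate SU_q(2)). -/
open Matrix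

variable {A : Type*} [Ring A] [Algebra ℝ A] [StarRing A] [StarModule ℝ A]

/-- The defining commutation relations of `M_q(2)` for a 2×2 matrix `x`
(with `qi` playing the role of `q⁻¹`). -/
def MqRel (q qi : ℝ) (x : Matrix (Fin 2) (Fin 2) A) : Prop :=
  x 0 0 * x 0 1 = q • (x 0 1 * x 0 0) ∧
  x 0 0 * x 1 0 = q • (x 1 0 * x 0 0) ∧
  x 0 1 * x 1 1 = q • (x 1 1 * x 0 1) ∧
  x 1 0 * x 1 1 = q • (x 1 1 * x 1 0) ∧
  x 0 1 * x 1 0 = x 1 0 * x 0 1 ∧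
  x 0 0 * x 1 1 - x 1 1 * x 0 0 = (q - qi) • (x 0 1 * x 1 0)

/-- The q-determinant `det_q(x) = x¹¹x²² − q x¹²x²¹`. -/
def qdet (q : ℝ) (x : Matrix (Fin 2) (Fin 2) A) : A :=
  x 0 0 * x 1 1 - q • (x 0 1 * x 1 0)

/-- The conjugate matrix `x̄ = [[x²², −q⁻¹x¹²],[−qx²¹, x¹¹]]`. -/
def qconj (q qi : ℝ) (x : Matrix (Fin 2) (Fin 2) A) : Matrix (Fin 2) (Fin 2) A :=
  !![x 1 1, -(qi • x 0 1); -(q • x 1 0), x 0 0]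

/-- The q-quaternion reality condition `x† = x̄`. -/
def RealityCond (q : ℝ) (x : Matrix (Fin 2) (Fin 2) A) : Prop :=
  star (x 0 0) = x 1 1 ∧ star (x 1 1) = x 0 0 ∧
  star (x 0 1) = -(q • x 1 0) ∧ star (x 1 0) = -(q⁻¹ • x 0 1)

/-- The matrix `T = x · r⁻¹` (each entry multiplied on the right by `r'`). -/
def scaledBy (x : Matrix (Fin 2) (Fin 2) A) (r' : A) : Matrix (Fin 2) (Fin 2) A :=
  Matrix.of fun i j => x i j * r'

/-- if `x` is a real q-quaternion matrix and `r` is a self-adjoint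
invertible central square root of `det_q(x)`, then `T := x r⁻¹` is unitary
(`T T̄ = T̄ T = I`, `T† = T̄`) and `det_q(T) = 1`. -/
theorem unit_qquaternion (q : ℝ) (hq : q ≠ 0)
    (x : Matrix (Fin 2) (Fin 2) A) (hx : MqRel q q⁻¹ x) (hreal : RealityCond q x)
    (r r' : A) (hrstar : star r = r)
    (hrr' : r * r' = 1) (hr'r : r' * r = 1)
    (hrcomm : ∀ i j : Fin 2, r * x i j = x i j * r)
    (hr2 : r * r = qdet q x) :
    scaledBy x r' * qconj q q⁻¹ (scaledBy x r') = 1 ∧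
    qconj q q⁻¹ (scaledBy x r') * scaledBy x r' = 1 ∧
    RealityCond q (scaledBy x r') ∧
    qdet q (scaledBy x r') = 1 := by
  
  obtain ⟨h1, h2, h3, h4, h5, h6⟩ := hx
  obtain ⟨hs00, hs11, hs01, hs10⟩ := hreal
  -- r' commutes with entries
  have hc : ∀ i j : Fin 2, r' * x i j = x i j * r' := by
    intro i j
    have : r' * (r * x i j) * r' = r' * (x i j * r) * r' := by rw [hrcomm]
    calc r' * x i j = r' * x i j * (r * r') := by rw [hrr', mul_one]
      _ = r' * (x i j * r) * r' := by simp only [mul_assoc]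
      _ = r' * (r * x i j) * r' := by rw [hrcomm]
      _ = (r' * r) * (x i j * r') := by simp only [mul_assoc]
      _ = x i j * r' := by rw [hr'r, one_mul]
  have hstar' : star r' = r' := by
    have h := congrArg star hrr'
    rw [StarMul.star_mul, star_one, hrstar] at h
    calc star r' = star r' * (r * r') := by rw [hrr', mul_one]
      _ = (star r' * r) * r' := by rw [mul_assoc]
      _ = r' := by rw [h, one_mul]
  -- key product lemma
  have keyp : ∀ a b : A, r' * b = b * r' → (a * r') * (b * r') = (a * b) * (r' * r') := by
    intro a b h
    calc (a * r') * (b * r') = a * ((r' * b) * r') := by simp only [mul_assoc]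
      _ = a * ((b * r') * r') := by rw [h]
      _ = (a * b) * (r' * r') := by simp only [mul_assoc]
  have hinv : qdet q x * (r' * r') = 1 := by
    rw [← hr2]
    calc r * r * (r' * r') = r * ((r * r') * r') := by simp only [mul_assoc]
      _ = 1 := by rw [hrr', one_mul, hrr']
  have hqq : (q⁻¹ : ℝ) * q = 1 := inv_mul_cancel₀ hq
  set s := r' * r' with hs
  -- scalar identities
  have e1 : x 0 0 * x 1 1 * s - q • (x 0 1 * x 1 0 * s) = 1 := by
    rw [← smul_mul_assoc, ← sub_mul]; exact hinv
  have e2 : x 1 1 * x 0 0 * s - q⁻¹ • (x 0 1 * x 1 0 * s) = 1 := by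
    have h11 : x 1 1 * x 0 0 * s
        = x 0 0 * x 1 1 * s - (q - q⁻¹) • (x 0 1 * x 1 0 * s) := by
      have : x 1 1 * x 0 0 = x 0 0 * x 1 1 - (q - q⁻¹) • (x 0 1 * x 1 0) := by
        rw [← h6, sub_sub_cancel]
      rw [this, sub_mul, smul_mul_assoc]
    rw [h11, sub_smul]
    calc x 0 0 * x 1 1 * s - (q • (x 0 1 * x 1 0 * s) - q⁻¹ • (x 0 1 * x 1 0 * s))
          - q⁻¹ • (x 0 1 * x 1 0 * s)
        = x 0 0 * x 1 1 * s - q • (x 0 1 * x 1 0 * s) := by abel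
      _ = 1 := e1
  -- now the matrix identities
  refine ⟨?_, ?_, ⟨?_, ?_, ?_, ?_⟩, ?_⟩
  · ext i j
    fin_cases i <;> fin_cases j <;>
      simp only [Matrix.mul_apply, Fin.sum_univ_two, scaledBy, qconj, Matrix.of_apply,
        Matrix.cons_val', Matrix.cons_val_zero, Matrix.cons_val_one, Matrix.head_cons,
        Matrix.head_fin_const, Matrix.empty_val', Matrix.cons_val_fin_one,
        Matrix.one_apply_eq, Matrix.one_apply_ne, Fin.zero_eq_one_iff, Fin.one_eq_zero_iff,
        Ne, Nat.succ_ne_self, not_false_iff, Fin.mk_zero, Fin.mk_one, Fin.isValue,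
        mul_neg, neg_mul, mul_smul_comm, smul_mul_assoc]
    · -- (0,0)
      rw [keyp _ _ (hc 1 1), keyp _ _ (hc 1 0)]
      show x 0 0 * x 1 1 * s + -(q • (x 0 1 * x 1 0 * s)) = 1
      rw [← sub_eq_add_neg]; exact e1
    · -- (0,1)
      rw [keyp _ _ (hc 0 1), keyp _ _ (hc 0 0)]
      show -(q⁻¹ • (x 0 0 * x 0 1 * s)) + x 0 1 * x 0 0 * s = (0 : A)
      rw [h1, smul_mul_assoc, smul_smul, hqq, one_smul, neg_add_cancel]
    · -- (1,0)
      rw [keyp _ _ (hc 1 1), keyp _ _ (hc 1 0)]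
      show x 1 0 * x 1 1 * s + -(q • (x 1 1 * x 1 0 * s)) = (0 : A)
      rw [h4, smul_mul_assoc, add_neg_cancel]
    · -- (1,1)
      rw [keyp _ _ (hc 0 1), keyp _ _ (hc 0 0)]
      show -(q⁻¹ • (x 1 0 * x 0 1 * s)) + x 1 1 * x 0 0 * s = 1
      rw [← h5, ← sub_eq_neg_add]
      exact e2
  · ext i j
    fin_cases i <;> fin_cases j <;>
      simp only [Matrix.mul_apply, Fin.sum_univ_two, scaledBy, qconj, Matrix.of_apply,
        Matrix.cons_val', Matrix.cons_val_zero, Matrix.cons_val_one, Matrix.head_cons,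
        Matrix.head_fin_const, Matrix.empty_val', Matrix.cons_val_fin_one,
        Matrix.one_apply_eq, Matrix.one_apply_ne, Fin.zero_eq_one_iff, Fin.one_eq_zero_iff,
        Ne, Nat.succ_ne_self, not_false_iff, Fin.mk_zero, Fin.mk_one, Fin.isValue,
        mul_neg, neg_mul, mul_smul_comm, smul_mul_assoc]
    · -- (0,0)
      rw [keyp _ _ (hc 0 0), keyp _ _ (hc 1 0)]
      show x 1 1 * x 0 0 * s + -(q⁻¹ • (x 0 1 * x 1 0 * s)) = 1
      rw [← sub_eq_add_neg]; exact e2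
    · -- (0,1)
      rw [keyp _ _ (hc 0 1), keyp _ _ (hc 1 1)]
      show x 1 1 * x 0 1 * s + -(q⁻¹ • (x 0 1 * x 1 1 * s)) = (0 : A)
      rw [h3, smul_mul_assoc, smul_smul, hqq, one_smul, add_neg_cancel]
    · -- (1,0)
      rw [keyp _ _ (hc 0 0), keyp _ _ (hc 1 0)]
      show -(q • (x 1 0 * x 0 0 * s)) + x 0 0 * x 1 0 * s = (0 : A)
      rw [h2, smul_mul_assoc, neg_add_cancel]
    · -- (1,1)
      rw [keyp _ _ (hc 0 1), keyp _ _ (hc 1 1)]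
      show -(q • (x 1 0 * x 0 1 * s)) + x 0 0 * x 1 1 * s = 1
      rw [← h5, ← sub_eq_neg_add]
      exact e1
  all_goals simp only [scaledBy, Matrix.of_apply, qdet]
  · rw [StarMul.star_mul, hstar', hs00, hc]
  · rw [StarMul.star_mul, hstar', hs11, hc]
  · rw [StarMul.star_mul, hstar', hs01, mul_neg, mul_smul_comm, hc]
  · rw [StarMul.star_mul, hstar', hs10, mul_neg, mul_smul_comm, hc]
  · rw [keyp _ _ (hc 1 1), keyp _ _ (hc 1 0)]
    exact e1
end

section
/- Let A be a unital *-algebra over ℝ, q a nonzero real number, and x a 2×2 matrix with entries in A satisfying the M_q(2) relations and the reality condition x† = x̄. Let ρ, u, s ∈ A be self-adjoint elements which commute with each other and with the four entries of x, and suppose u·det_q(x) = det_q(x)·u = 1 and s²·(1 + ρ²u) = (1 + ρ²u)·s² = 1. Define the 4×2 matrix U whose upper 2×2 block is s·I₂ and whose lower 2×2 block is ρ·x·u·s. Then U†U = I₂ (where U† is the conjugate-transpose using the star of A), and consequently the 4×4 matrix 𝒫 := U U† is a self-adjoint idempotent: 𝒫† = 𝒫 and 𝒫² = 𝒫 (the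 projector of the q-deformed instanton projective module). -/
open Matrix

variable {A : Type*} [Ring A] [Algebra ℝ A] [StarRing A] [StarModule ℝ A]

/-- The 4×2 matrix `U` with upper 2×2 block `s·I₂` and lower 2×2 block `ρ x u s`. -/
def instU (x : Matrix (Fin 2) (Fin 2) A) (ρ u s : A) :
    Matrix (Fin 2 ⊕ Fin 2) (Fin 2) A :=
  Matrix.of fun i j =>
    Sum.elim (fun i' => if i' = j then s else 0) (fun i' => ρ * x i' j * u * s) i

/-- `U† U = I₂`, hence `𝒫 := U U†` is a self-adjoint idempotent
(the projector of the q-deformed instanton projective module). -/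
theorem instanton_projector (q : ℝ) (hq : q ≠ 0)
    (x : Matrix (Fin 2) (Fin 2) A) (hx : MqRel q q⁻¹ x) (hreal : RealityCond q x)
    (ρ u s : A)
    (hρstar : star ρ = ρ) (hustar : star u = u) (hsstar : star s = s)
    (hρu : ρ * u = u * ρ) (hρs : ρ * s = s * ρ) (hus : u * s = s * u)
    (hρx : ∀ i j : Fin 2, ρ * x i j = x i j * ρ)
    (hux : ∀ i j : Fin 2, u * x i j = x i j * u)
    (hsx : ∀ i j : Fin 2, s * x i j = x i j * s)
    (hu1 : u * qdet q x = 1) (hu2 : qdet q x * u = 1)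
    (hs1 : s * s * (1 + ρ * ρ * u) = 1) (hs2 : (1 + ρ * ρ * u) * (s * s) = 1) :
    (instU x ρ u s)ᴴ * instU x ρ u s = 1 ∧
    (instU x ρ u s * (instU x ρ u s)ᴴ)ᴴ = instU x ρ u s * (instU x ρ u s)ᴴ ∧
    (instU x ρ u s * (instU x ρ u s)ᴴ) * (instU x ρ u s * (instU x ρ u s)ᴴ)
      = instU x ρ u s * (instU x ρ u s)ᴴ := by
  obtain ⟨e1, e2, e3, e4, e5, e6⟩ := hx
  obtain ⟨hr1, hr2, hr3, hr4⟩ := hreal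
  -- star entries commute with ρ, u, s as well
  have hρxs : ∀ i j : Fin 2, ρ * star (x i j) = star (x i j) * ρ := fun i j => by
    have := congrArg star (hρx i j)
    rw [StarMul.star_mul, StarMul.star_mul, hρstar] at this
    exact this.symm
  have huxs : ∀ i j : Fin 2, u * star (x i j) = star (x i j) * u := fun i j => by
    have := congrArg star (hux i j)
    rw [StarMul.star_mul, StarMul.star_mul, hustar] at this
    exact this.symm
  have hsxs : ∀ i j : Fin 2, s * star (x i j) = star (x i j) * s := fun i j => by
    have := congrArg star (hsx i j)
    rw [StarMul.star_mul, StarMul.star_mul, hsstar] at this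
    exact this.symm
  have shift : ∀ {p y : A}, p * y = y * p → ∀ t : A, p * (y * t) = y * (p * t) := by
    intro p y h t; rw [← mul_assoc, h, mul_assoc]
  -- the key "xᴴ x = det_q • 1" relations
  have k00 : star (x 0 0) * x 0 0 + star (x 1 0) * x 1 0 = qdet q x := by
    rw [hr1, hr4, neg_mul, smul_mul_assoc]
    have h : x 1 1 * x 0 0 = x 0 0 * x 1 1 - (q - q⁻¹) • (x 0 1 * x 1 0) := by
      rw [← e6]; abel
    rw [h, qdet]
    module
  have k01 : star (x 0 0) * x 0 1 + star (x 1 0) * x 1 1 = 0 := by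
    rw [hr1, hr4, neg_mul, smul_mul_assoc, e3, smul_smul, inv_mul_cancel₀ hq, one_smul]
    abel
  have k10 : star (x 0 1) * x 0 0 + star (x 1 1) * x 1 0 = 0 := by
    rw [hr3, hr2, neg_mul, smul_mul_assoc, e2]
    abel
  have k11 : star (x 0 1) * x 0 1 + star (x 1 1) * x 1 1 = qdet q x := by
    rw [hr3, hr2, neg_mul, smul_mul_assoc, ← e5, qdet]
    abel
  -- normalizing each summand
  have term : ∀ i' i j : Fin 2,
      s * (star u * (star (x i' i) * star ρ)) * (ρ * x i' j * u * s)
        = star (x i' i) * (x i' j * (ρ * (ρ * (u * (u * (s * s)))))) := by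
    intro i' i j
    rw [hustar, hρstar]
    simp only [mul_assoc]
    simp only [shift (hρx i' j), shift (hux i' j), shift (hsx i' j),
      shift (hρxs i' i), shift (huxs i' i), shift (hsxs i' i),
      shift hρu.symm, shift hρs.symm, shift hus.symm,
      hρx i' j, hux i' j, hsx i' j, hρxs i' i, huxs i' i, hsxs i' i,
      hρu.symm, hρs.symm, hus.symm]
  -- det_q commutes with ρ
  have hmoveρ : ∀ y z : A, ρ * y = y * ρ → ρ * z = z * ρ → ρ * (y * z) = y * z * ρ := by
    intro y z h1 h2; rw [← mul_assoc, h1, mul_assoc, h2, ← mul_assoc]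
  have hdρ : ρ * qdet q x = qdet q x * ρ := by
    rw [qdet, mul_sub, sub_mul, mul_smul_comm, smul_mul_assoc,
      hmoveρ _ _ (hρx 0 0) (hρx 1 1), hmoveρ _ _ (hρx 0 1) (hρx 1 0)]
  have hfin : qdet q x * (ρ * (ρ * (u * (u * (s * s))))) = ρ * (ρ * (u * (s * s))) := by
    rw [← shift hdρ, ← shift hdρ, ← mul_assoc (qdet q x), hu2, one_mul]
  have hsum : s * s + ρ * (ρ * (u * (s * s))) = 1 := by
    rw [← hs2]; noncomm_ring
  have h1 : (instU x ρ u s)ᴴ * instU x ρ u s = 1 := by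
    ext i j
    simp only [Matrix.mul_apply, Matrix.conjTranspose_apply, instU, Matrix.of_apply,
      Fintype.sum_sum_type, Fin.sum_univ_two, Sum.elim_inl, Sum.elim_inr, Matrix.one_apply]
    fin_cases i <;> fin_cases j <;> simp [hsstar] <;> rw [term, term]
    · rw [← mul_assoc (star (x 0 0)), ← mul_assoc (star (x 1 0)), ← add_mul, k00, hfin]
      exact hsum
    · rw [← mul_assoc (star (x 0 0)), ← mul_assoc (star (x 1 0)), ← add_mul, k01, zero_mul]
    · rw [← mul_assoc (star (x 0 1)), ← mul_assoc (star (x 1 1)), ← add_mul, k10, zero_mul]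
    · rw [← mul_assoc (star (x 0 1)), ← mul_assoc (star (x 1 1)), ← add_mul, k11, hfin]
      exact hsum
  refine ⟨h1, by simp [Matrix.conjTranspose_mul], ?_⟩
  calc instU x ρ u s * (instU x ρ u s)ᴴ * (instU x ρ u s * (instU x ρ u s)ᴴ)
      = instU x ρ u s * ((instU x ρ u s)ᴴ * instU x ρ u s * (instU x ρ u s)ᴴ) := by
        simp only [Matrix.mul_assoc]
    _ = instU x ρ u s * (instU x ρ u s)ᴴ := by rw [h1, Matrix.one_mul]
end
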